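/- Let σ_ξ > 0 and σ_η > 0 and set q = 3 σ_ξ². Define φ: (0,∞) → ℝ by φ(u) = 6 (σ_ξ²/σ_η²) u^{−2} − 2 e^{−σ_η u/σ_ξ} ( 1 + 3 σ_ξ/(σ_η u) + 3 σ_ξ²/(σ_η² u²) ). Then φ is twice differentiable on (0,∞), satisfies the modified-Bessel-type ODE u² φ''(u) − ( (σ_η²/σ_ξ²) u² + 2q/σ_ξ² ) φ(u) = −2q/σ_ξ² (i.e. u² φ''(u) − ((σ_η²/σ_ξ²) u² + 6) φ(u) = −6) for all u > 0, is bounded on (0,∞), and lim_{u↓0} φ(u) = 1. -/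

import Mathlib

open MeasureTheory Set Filter

noncomputable section

/-- the characteristic function of the killed exponential functional for two
independent Brownian motions with `q = 3 σξ²`, on `(0,∞)` -/
def phiBM (σξ ση : ℝ) (u : ℝ) : ℝ :=
  6 * (σξ ^ 2 / ση ^ 2) / u ^ 2
    - 2 * Real.exp (-(ση * u / σξ)) * (1 + 3 * σξ / (ση * u) + 3 * σξ ^ 2 / (ση ^ 2 * u ^ 2))

/-!
The substitution `t = (ση / σξ) u` reduces everything to `σξ = ση = 1`, where
`φ(t) = N(t) / t²` with `N(t) = 6 - e^{-t} (2t² + 6t + 6)`; the ODE is then an identity between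
explicit derivatives. Since `N' = 2e^{-t}(t² + t)`, comparing derivatives with `1 - t ≤ e^{-t}` and
`e^{-t}(1 + t) ≤ 1` gives `max 0 (t² - t⁴/2) ≤ N(t) ≤ t²` for `t ≥ 0`, i.e. `0 ≤ φ ≤ 1` and
`φ(t) ≥ 1 - t²/2`, which yields both the bound and the limit at `0`.
-/

section

variable {𝕜 : Type*} [NontriviallyNormedField 𝕜]

theorem deriv_comp_mul_left' (f : 𝕜 → 𝕜) (c : 𝕜) :
    deriv (f <| c * ·) = fun x => c * deriv f (c * x) :=
  funext fun x => deriv_comp_mul_left c f x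

theorem deriv_deriv_comp_mul_left (f : 𝕜 → 𝕜) (c x : 𝕜) :
    deriv (deriv (f <| c * ·)) x = c ^ 2 * deriv (deriv f) (c * x) := by
  rw [deriv_comp_mul_left', deriv_const_mul_field, deriv_comp_mul_left, smul_eq_mul, sq, mul_assoc]

end

lemma tendsto_const_mul_nhdsGT_zero {a : ℝ} (ha : 0 < a) :
    Tendsto (a * ·) (nhdsWithin 0 (Ioi 0)) (nhdsWithin 0 (Ioi 0)) :=
  tendsto_nhdsWithin_of_tendsto_nhds_of_eventually_within _
    (by simpa using ((continuous_const_mul a).tendsto 0).mono_left nhdsWithin_le_nhds)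
    (eventually_nhdsWithin_of_forall fun _ hu => mul_pos ha hu)

lemma monotoneOn_Ici_of_hasDerivAt_nonneg {f f' : ℝ → ℝ} {a : ℝ}
    (hf : ∀ t, HasDerivAt f (f' t) t) (hf' : ∀ t, a < t → 0 ≤ f' t) : MonotoneOn f (Ici a) :=
  monotoneOn_of_hasDerivWithinAt_nonneg (convex_Ici a)
    (fun t _ => (hf t).continuousAt.continuousWithinAt) (fun t _ => (hf t).hasDerivWithinAt)
    (by simpa using hf')

section

open Real

def phiNum (t : ℝ) : ℝ := 6 - exp (-t) * (2 * t ^ 2 + 6 * t + 6)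

lemma phiNum_zero : phiNum 0 = 0 := by norm_num [phiNum]

lemma hasDerivAt_phiNum (t : ℝ) : HasDerivAt phiNum (2 * exp (-t) * (t ^ 2 + t)) t := by
  have hp : HasDerivAt (fun s => 2 * s ^ 2 + 6 * s + 6) (4 * t + 6) t :=
    ((((hasDerivAt_pow 2 t).const_mul 2).fun_add ((hasDerivAt_id t).const_mul 6)).add_const
      6).congr_deriv (by simp; ring)
  exact (((hasDerivAt_neg t).exp.fun_mul hp).const_sub 6).congr_deriv (by ring)

lemma phiNum_nonneg {t : ℝ} (ht : 0 ≤ t) : 0 ≤ phiNum t := by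
  have hmono := monotoneOn_Ici_of_hasDerivAt_nonneg (a := 0) hasDerivAt_phiNum
    fun s hs => by have := exp_pos (-s); positivity
  simpa [phiNum_zero] using hmono self_mem_Ici ht ht

lemma phiNum_le_sq {t : ℝ} (ht : 0 ≤ t) : phiNum t ≤ t ^ 2 := by
  have hmono := monotoneOn_Ici_of_hasDerivAt_nonneg (a := 0)
    (fun s => (hasDerivAt_pow 2 s).fun_sub (hasDerivAt_phiNum s)) fun s hs => by
      have : exp (-s) * (s + 1) ≤ 1 :=
        calc exp (-s) * (s + 1) ≤ exp (-s) * exp s := by gcongr; exact add_one_le_exp s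
          _ = 1 := by rw [← exp_add, neg_add_cancel, exp_zero]
      norm_num
      nlinarith
  simpa [phiNum_zero] using hmono self_mem_Ici ht ht

lemma sq_sub_le_phiNum {t : ℝ} (ht : 0 ≤ t) : t ^ 2 - t ^ 4 / 2 ≤ phiNum t := by
  have hmono := monotoneOn_Ici_of_hasDerivAt_nonneg (a := 0)
    (fun s => ((hasDerivAt_phiNum s).fun_sub (hasDerivAt_pow 2 s)).fun_add
      ((hasDerivAt_pow 4 s).div_const 2)) fun s hs => by
      have : (1 - s) * (s + 1) ≤ exp (-s) * (s + 1) := by gcongr; exact one_sub_le_exp_neg s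
      norm_num
      nlinarith
  have := hmono self_mem_Ici ht ht
  simp only [phiNum_zero] at this
  linarith

lemma phiBM_one_one_eq {t : ℝ} (ht : t ≠ 0) : phiBM 1 1 t = phiNum t / t ^ 2 := by
  simp only [phiBM, phiNum]
  field_simp
  ring_nf

lemma hasDerivAt_phiBM_one_one {t : ℝ} (ht : t ≠ 0) :
    HasDerivAt (phiBM 1 1) ((exp (-t) * (2 * t ^ 3 + 6 * t ^ 2 + 12 * t + 12) - 12) / t ^ 3) t := by
  have hev : (fun s => phiNum s / s ^ 2) =ᶠ[nhds t] phiBM 1 1 := by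
    filter_upwards [isOpen_ne.mem_nhds ht] with s hs using (phiBM_one_one_eq hs).symm
  refine (((hasDerivAt_phiNum t).div (hasDerivAt_pow 2 t) (pow_ne_zero 2 ht)).congr_of_eventuallyEq
    hev.symm).congr_deriv ?_
  simp only [phiNum]
  field_simp
  ring

lemma hasDerivAt_deriv_phiBM_one_one {t : ℝ} (ht : t ≠ 0) :
    HasDerivAt (deriv (phiBM 1 1))
      ((36 - exp (-t) * (2 * t ^ 4 + 6 * t ^ 3 + 18 * t ^ 2 + 36 * t + 36)) / t ^ 4) t := by
  have hev : (fun s => (exp (-s) * (2 * s ^ 3 + 6 * s ^ 2 + 12 * s + 12) - 12) / s ^ 3)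
      =ᶠ[nhds t] deriv (phiBM 1 1) := by
    filter_upwards [isOpen_ne.mem_nhds ht] with s hs using (hasDerivAt_phiBM_one_one hs).deriv.symm
  have hp : HasDerivAt (fun s => 2 * s ^ 3 + 6 * s ^ 2 + 12 * s + 12)
      (6 * t ^ 2 + 12 * t + 12) t :=
    ((((hasDerivAt_pow 3 t).const_mul 2).fun_add ((hasDerivAt_pow 2 t).const_mul 6)).fun_add
      ((hasDerivAt_id t).const_mul 12) |>.add_const 12).congr_deriv (by simp; ring)
  refine (((((hasDerivAt_neg t).exp.fun_mul hp).sub_const 12).div (hasDerivAt_pow 3 t)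
    (pow_ne_zero 3 ht)).congr_of_eventuallyEq hev.symm).congr_deriv ?_
  field_simp
  ring

end

lemma phiBM_one_one_ode {t : ℝ} (ht : t ≠ 0) :
    t ^ 2 * deriv (deriv (phiBM 1 1)) t - (t ^ 2 + 6) * phiBM 1 1 t = -6 := by
  rw [(hasDerivAt_deriv_phiBM_one_one ht).deriv, phiBM_one_one_eq ht, phiNum]
  field_simp
  ring

lemma phiBM_one_one_le_one {t : ℝ} (ht : 0 < t) : phiBM 1 1 t ≤ 1 := by
  rw [phiBM_one_one_eq ht.ne', div_le_one (by positivity)]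
  exact phiNum_le_sq ht.le

lemma abs_phiBM_one_one_le_one {t : ℝ} (ht : 0 < t) : |phiBM 1 1 t| ≤ 1 := by
  refine abs_le.2 ⟨?_, phiBM_one_one_le_one ht⟩
  rw [phiBM_one_one_eq ht.ne']
  linarith [div_nonneg (phiNum_nonneg ht.le) (sq_nonneg t)]

lemma one_sub_sq_div_two_le_phiBM_one_one {t : ℝ} (ht : 0 < t) :
    1 - t ^ 2 / 2 ≤ phiBM 1 1 t := by
  rw [phiBM_one_one_eq ht.ne', le_div_iff₀ (by positivity)]
  linarith [sq_sub_le_phiNum ht.le]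

lemma tendsto_phiBM_one_one : Tendsto (phiBM 1 1) (nhdsWithin 0 (Ioi 0)) (nhds 1) := by
  have hlow : Tendsto (fun t : ℝ => 1 - t ^ 2 / 2) (nhdsWithin 0 (Ioi 0)) (nhds 1) := by
    have : Continuous (fun t : ℝ => 1 - t ^ 2 / 2) := by fun_prop
    simpa using (this.tendsto 0).mono_left nhdsWithin_le_nhds
  refine tendsto_of_tendsto_of_tendsto_of_le_of_le' hlow tendsto_const_nhds ?_ ?_ <;>
    filter_upwards [self_mem_nhdsWithin] with t ht
  exacts [one_sub_sq_div_two_le_phiBM_one_one ht, phiBM_one_one_le_one ht]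

lemma phiBM_eq_comp_mul (σξ ση : ℝ) :
    phiBM σξ ση = fun u => phiBM 1 1 (ση / σξ * u) := by
  funext u
  rcases eq_or_ne u 0 with rfl | hu
  · simp [phiBM]
  rcases eq_or_ne σξ 0 with rfl | hσξ
  · simp [phiBM]
  rcases eq_or_ne ση 0 with rfl | hση
  · simp [phiBM]
  simp only [phiBM]
  field_simp

theorem stmt17 (σξ ση q : ℝ) (hσξ : 0 < σξ) (hση : 0 < ση) (hq : q = 3 * σξ ^ 2) :
    (∀ u : ℝ, 0 < u →
      DifferentiableAt ℝ (phiBM σξ ση) u ∧ DifferentiableAt ℝ (deriv (phiBM σξ ση)) u) ∧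
    (∀ u : ℝ, 0 < u →
      u ^ 2 * deriv (deriv (phiBM σξ ση)) u
          - ((ση ^ 2 / σξ ^ 2) * u ^ 2 + 2 * q / σξ ^ 2) * phiBM σξ ση u
        = -(2 * q / σξ ^ 2)) ∧
    (∃ C : ℝ, ∀ u : ℝ, 0 < u → |phiBM σξ ση u| ≤ C) ∧
    Filter.Tendsto (phiBM σξ ση) (nhdsWithin 0 (Ioi 0)) (nhds 1) := by
  have ha : 0 < ση / σξ := div_pos hση hσξ
  have hφ := phiBM_eq_comp_mul σξ ση
  have hφ' : deriv (phiBM σξ ση) = fun u => ση / σξ * deriv (phiBM 1 1) (ση / σξ * u) := by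
    rw [hφ]; exact deriv_comp_mul_left' _ _
  have hscale (u : ℝ) : HasDerivAt (ση / σξ * ·) (ση / σξ) u := by
    simpa using (hasDerivAt_id u).const_mul (ση / σξ)
  refine ⟨fun u hu => ⟨?_, ?_⟩, fun u hu => ?_, ⟨1, fun u hu => ?_⟩, ?_⟩
  · rw [hφ]
    exact ((hasDerivAt_phiBM_one_one (mul_pos ha hu).ne').comp u (hscale u)).differentiableAt
  · rw [hφ']
    exact (((hasDerivAt_deriv_phiBM_one_one (mul_pos ha hu).ne').comp u
      (hscale u)).const_mul _).differentiableAt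
  · have h6 : 2 * q / σξ ^ 2 = 6 := by rw [hq]; field_simp; norm_num
    rw [hφ, deriv_deriv_comp_mul_left, h6, show ση ^ 2 / σξ ^ 2 * u ^ 2 = (ση / σξ * u) ^ 2 by ring]
    linear_combination phiBM_one_one_ode (mul_pos ha hu).ne'
  · rw [hφ]
    exact abs_phiBM_one_one_le_one (mul_pos ha hu)
  · rw [hφ]
    exact tendsto_phiBM_one_one.comp (tendsto_const_mul_nhdsGT_zero ha)

end
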